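/- arXiv:1102.1451 — 5 statements merged into one kernel-verified Lean document; each statement's English description precedes it below -/
import Mathlib

section
/- Let S be an ordered semigroup satisfying axioms O1–O5, and let α and β be functionals on S. Then α(s) ≤ β(s) for all s ∈ S if and only if there exists a functional γ on S such that α + γ = β (pointwise). -/
open scoped ENNReal

/-- `CC s t` : `s` is (sequentially) compactly contained in `t`, written `s ≪ t`. -/
def CC {S : Type*} [AddCommMonoid S] [PartialOrder S] (s t : S) : Prop :=
  ∀ u : ℕ → S, Monotone u → ∀ x : S, IsLUB (Set.range u) x → t ≤ x → ∃ n, s ≤ u n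

/-- An ordered semigroup (positive, with translation invariant order) satisfying axioms O1-O5. -/
structure CuO5 (S : Type*) [AddCommMonoid S] [PartialOrder S] : Prop where
  addRightMono : ∀ {s t : S}, s ≤ t → ∀ r : S, s + r ≤ t + r
  zeroLe : ∀ s : S, 0 ≤ s
  O1 : ∀ u : ℕ → S, Monotone u → ∃ x : S, IsLUB (Set.range u) x
  O2 : ∀ s : S, ∃ u : ℕ → S, (∀ n, CC (u n) (u (n + 1))) ∧ IsLUB (Set.range u) s
  O3 : ∀ {s₁ t₁ s₂ t₂ : S}, CC s₁ t₁ → CC s₂ t₂ → CC (s₁ + s₂) (t₁ + t₂)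
  O4 : ∀ u v : ℕ → S, Monotone u → Monotone v → ∀ x y : S,
    IsLUB (Set.range u) x → IsLUB (Set.range v) y →
    IsLUB (Set.range fun n => u n + v n) (x + y)
  O5 : ∀ {s' s t : S}, CC s' s → s ≤ t → ∃ r : S, s' + r ≤ t ∧ t ≤ s + r

/-- Axioms O1-O6. -/
structure CuO6 (S : Type*) [AddCommMonoid S] [PartialOrder S] extends CuO5 S : Prop where
  O6 : ∀ {s r t : S}, s ≤ r + t → ∀ {s' : S}, CC s' s →
    ∃ r' t' : S, s' ≤ r' + t' ∧ r' ≤ r ∧ r' ≤ s ∧ t' ≤ t ∧ t' ≤ s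

/-- A functional on `S`: additive, order preserving, zero preserving map to `[0,∞]`
preserving suprema of increasing sequences. -/
structure IsFunctional {S : Type*} [AddCommMonoid S] [PartialOrder S] (l : S → ℝ≥0∞) : Prop where
  map_zero : l 0 = 0
  map_add : ∀ s t : S, l (s + t) = l s + l t
  mono : ∀ {s t : S}, s ≤ t → l s ≤ l t
  map_sup : ∀ u : ℕ → S, Monotone u → ∀ x : S, IsLUB (Set.range u) x → l x = ⨆ n, l (u n)

/-- Real multiplication on `S` : a map `(0,∞] × S → S` additive, order preserving and
sup-(of increasing sequences)-preserving in each variable, with `1 · s = s`.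
Scalars are elements of `ℝ≥0∞` required to be positive. -/
structure RealMul (S : Type*) [AddCommMonoid S] [PartialOrder S] where
  smul : ℝ≥0∞ → S → S
  add_left : ∀ {a b : ℝ≥0∞}, 0 < a → 0 < b → ∀ s : S, smul (a + b) s = smul a s + smul b s
  add_right : ∀ {a : ℝ≥0∞}, 0 < a → ∀ s t : S, smul a (s + t) = smul a s + smul a t
  mono_left : ∀ {a b : ℝ≥0∞}, 0 < a → a ≤ b → ∀ s : S, smul a s ≤ smul b s
  mono_right : ∀ {a : ℝ≥0∞}, 0 < a → ∀ {s t : S}, s ≤ t → smul a s ≤ smul a t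
  sup_left : ∀ u : ℕ → ℝ≥0∞, Monotone u → 0 < u 0 → ∀ s : S,
    IsLUB (Set.range fun n => smul (u n) s) (smul (⨆ n, u n) s)
  sup_right : ∀ {a : ℝ≥0∞}, 0 < a → ∀ u : ℕ → S, Monotone u → ∀ x : S,
    IsLUB (Set.range u) x → IsLUB (Set.range fun n => smul a (u n)) (smul a x)
  one_smul : ∀ s : S, smul 1 s = s

/-- `D` is a dense subset of `S`: every element of `S` is the supremum of a rapidly
increasing sequence of elements of `D`. -/
def IsDenseSub {S : Type*} [AddCommMonoid S] [PartialOrder S] (D : Set S) : Prop :=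
  ∀ s : S, ∃ u : ℕ → S, (∀ n, u n ∈ D) ∧ (∀ n, CC (u n) (u (n + 1))) ∧ IsLUB (Set.range u) s

/-- `m` is the least upper bound of the functionals `l₁` and `l₂` in `F(S)`
(pointwise order). -/
def IsFSup {S : Type*} [AddCommMonoid S] [PartialOrder S] (l₁ l₂ m : S → ℝ≥0∞) : Prop :=
  IsFunctional m ∧ (∀ s, l₁ s ≤ m s) ∧ (∀ s, l₂ s ≤ m s) ∧
    ∀ d : S → ℝ≥0∞, IsFunctional d → (∀ s, l₁ s ≤ d s) → (∀ s, l₂ s ≤ d s) → ∀ s, m s ≤ d s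

/-- `m` is the greatest lower bound of the functionals `l₁` and `l₂` in `F(S)`
(pointwise order). -/
def IsFInf {S : Type*} [AddCommMonoid S] [PartialOrder S] (l₁ l₂ m : S → ℝ≥0∞) : Prop :=
  IsFunctional m ∧ (∀ s, m s ≤ l₁ s) ∧ (∀ s, m s ≤ l₂ s) ∧
    ∀ d : S → ℝ≥0∞, IsFunctional d → (∀ s, d s ≤ l₁ s) → (∀ s, d s ≤ l₂ s) → ∀ s, d s ≤ m s

/-- An isomorphism of ordered semigroups between `S` and the extended natural numbers. -/
def IsOrdSemigroupIso {S : Type*} [AddCommMonoid S] [PartialOrder S] (e : S ≃ ℕ∞) : Prop :=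
  (∀ a b : S, e (a + b) = e a + e b) ∧ e 0 = 0 ∧ ∀ a b : S, a ≤ b ↔ e a ≤ e b
/-!
Off the set where `α` is infinite, `β - α` is additive, and axiom O5 makes it monotone; putting
`⊤` where `α` is infinite keeps it additive and monotone, and `α` plus it is `β`. Such a map
fails to be a functional only by not preserving suprema, and replacing it by the supremum of
its values on elements compactly contained in the argument repairs this (O2–O4) without
changing the sum with `α`.
-/

namespace CuO5

variable {S : Type*} [AddCommMonoid S] [PartialOrder S]

theorem add_le_add (hS : CuO5 S) {a b c d : S} (hab : a ≤ b) (hcd : c ≤ d) :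
    a + c ≤ b + d :=
  calc a + c ≤ b + c := hS.addRightMono hab c
    _ = c + b := add_comm _ _
    _ ≤ d + b := hS.addRightMono hcd b
    _ = b + d := add_comm _ _

end CuO5

section CompactContainment

variable {S : Type*} [AddCommMonoid S] [PartialOrder S]

theorem CC.le {s t : S} (h : CC s t) : s ≤ t := by
  obtain ⟨n, hn⟩ := h (fun _ => t) monotone_const t
    (by rw [Set.range_const]; exact isLUB_singleton) le_rfl
  exact hn

theorem cc_of_le_of_cc {r s t : S} (hrs : r ≤ s) (hst : CC s t) : CC r t := fun u hu x hx htx =>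
  (hst u hu x hx htx).imp fun _ hn => hrs.trans hn

theorem cc_of_cc_of_le {r s t : S} (hrs : CC r s) (hst : s ≤ t) : CC r t := fun u hu x hx htx =>
  hrs u hu x hx (hst.trans htx)

theorem cc_zero (hS : CuO5 S) (t : S) : CC (0 : S) t :=
  fun u _ _ _ _ => ⟨0, hS.zeroLe (u 0)⟩

theorem monotone_of_cc_succ {u : ℕ → S} (hu : ∀ n, CC (u n) (u (n + 1))) : Monotone u :=
  monotone_nat_of_le_succ fun n => (hu n).le

theorem cc_of_cc_succ_of_isLUB {u : ℕ → S} {s : S} (hu : ∀ n, CC (u n) (u (n + 1)))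
    (hs : IsLUB (Set.range u) s) (n : ℕ) : CC (u n) s :=
  cc_of_cc_of_le (hu n) (hs.1 ⟨n + 1, rfl⟩)

theorem exists_cc_of_cc_of_isLUB (hS : CuO5 S) {u : ℕ → S} (hu : Monotone u) {x y : S}
    (hx : IsLUB (Set.range u) x) (hy : CC y x) : ∃ n, CC y (u n) := by
  obtain ⟨z, hz, hzx⟩ := hS.O2 x
  obtain ⟨k, hyz⟩ := hy z (monotone_of_cc_succ hz) x hzx le_rfl
  obtain ⟨n, hzu⟩ := hz (k + 1) u hu x hx (hzx.1 ⟨k + 2, rfl⟩)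
  exact ⟨n, cc_of_cc_of_le (cc_of_le_of_cc hyz (hz k)) hzu⟩

end CompactContainment

section Regularize

variable {S : Type*} [AddCommMonoid S] [PartialOrder S]

noncomputable def regularize (f : S → ℝ≥0∞) (s : S) : ℝ≥0∞ :=
  ⨆ x : {x : S // CC x s}, f x

variable {f : S → ℝ≥0∞}

theorem le_regularize {x s : S} (h : CC x s) : f x ≤ regularize f s :=
  le_iSup (fun x : {x : S // CC x s} => f x) ⟨x, h⟩

theorem regularize_le (hf : Monotone f) (s : S) : regularize f s ≤ f s :=
  iSup_le fun x => hf x.2.le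

theorem regularize_mono : Monotone (regularize f) := fun _ _ hst =>
  iSup_le fun x => le_regularize (cc_of_cc_of_le x.2 hst)

theorem regularize_add (hS : CuO5 S) (hf : Monotone f)
    (hadd : ∀ s t, f (s + t) = f s + f t) (s t : S) :
    regularize f (s + t) = regularize f s + regularize f t := by
  refine le_antisymm (iSup_le fun ⟨x, hx⟩ => ?_) ?_
  · obtain ⟨u, hu, hus⟩ := hS.O2 s
    obtain ⟨v, hv, hvt⟩ := hS.O2 t
    have huv : Monotone fun n => u n + v n := fun m n hmn =>
      hS.add_le_add (monotone_of_cc_succ hu hmn) (monotone_of_cc_succ hv hmn)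
    obtain ⟨n, hn⟩ := hx _ huv (s + t)
      (hS.O4 u v (monotone_of_cc_succ hu) (monotone_of_cc_succ hv) s t hus hvt) le_rfl
    calc f x ≤ f (u n + v n) := hf hn
      _ = f (u n) + f (v n) := hadd _ _
      _ ≤ regularize f s + regularize f t :=
        add_le_add (le_regularize (cc_of_cc_succ_of_isLUB hu hus n))
          (le_regularize (cc_of_cc_succ_of_isLUB hv hvt n))
  · have : ∀ r : S, Nonempty {x : S // CC x r} := fun r => ⟨⟨0, cc_zero hS r⟩⟩
    refine ENNReal.iSup_add_iSup_le fun x y => ?_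
    rw [← hadd]
    exact le_regularize (hS.O3 x.2 y.2)

theorem isFunctional_regularize (hS : CuO5 S) (hf : Monotone f) (hf0 : f 0 = 0)
    (hadd : ∀ s t, f (s + t) = f s + f t) : IsFunctional (regularize f) where
  map_zero := le_antisymm ((regularize_le hf 0).trans_eq hf0) zero_le
  map_add := regularize_add hS hf hadd
  mono := fun h => regularize_mono h
  map_sup u hu x hx := by
    refine le_antisymm (iSup_le fun y => ?_) (iSup_le fun n => regularize_mono (hx.1 ⟨n, rfl⟩))
    obtain ⟨n, hn⟩ := exists_cc_of_cc_of_isLUB hS hu hx y.2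
    exact le_iSup_of_le n (le_regularize hn)

theorem add_regularize_eq (hS : CuO5 S) {α β : S → ℝ≥0∞} (hα : IsFunctional α)
    (hβ : IsFunctional β) (hf : Monotone f) (h : ∀ s, α s + f s = β s) (s : S) :
    α s + regularize f s = β s := by
  refine le_antisymm ((add_le_add_right (regularize_le hf s) _).trans_eq (h s)) ?_
  obtain ⟨z, hz, hzs⟩ := hS.O2 s
  rw [hβ.map_sup z (monotone_of_cc_succ hz) s hzs]
  refine iSup_le fun k => ?_
  calc β (z k) = α (z k) + f (z k) := (h _).symm
    _ ≤ α s + regularize f s :=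
      add_le_add (hα.mono (hzs.1 ⟨k, rfl⟩)) (le_regularize (cc_of_cc_succ_of_isLUB hz hzs k))

end Regularize

section Excess

variable {S : Type*} {α β : S → ℝ≥0∞}

noncomputable def excess (α β : S → ℝ≥0∞) (s : S) : ℝ≥0∞ :=
  if α s = ⊤ then ⊤ else β s - α s

theorem add_excess (hle : ∀ s, α s ≤ β s) (s : S) : α s + excess α β s = β s := by
  unfold excess
  split_ifs with hs
  · rw [hs, top_add, eq_comm, ← top_le_iff, ← hs]
    exact hle s
  · exact add_tsub_cancel_of_le (hle s)

variable [AddCommMonoid S] [PartialOrder S]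

theorem IsFunctional.cross_add_le (hS : CuO5 S) (hα : IsFunctional α) (hβ : IsFunctional β)
    (hle : ∀ s, α s ≤ β s) {u v : S} (huv : u ≤ v) : β u + α v ≤ β v + α u := by
  obtain ⟨x, hx, hxu⟩ := hS.O2 u
  rw [hβ.map_sup x (monotone_of_cc_succ hx) u hxu, ENNReal.iSup_add]
  refine iSup_le fun k => ?_
  have hxu' : x (k + 1) ≤ u := hxu.1 ⟨k + 1, rfl⟩
  obtain ⟨c, hc, hvc⟩ := hS.O5 (hx k) (hxu'.trans huv)
  calc β (x k) + α v ≤ β (x k) + (α (x (k + 1)) + β c) := by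
        gcongr
        exact (hα.mono hvc).trans_eq (hα.map_add _ _) |>.trans (add_le_add_right (hle c) _)
    _ = β (x k + c) + α (x (k + 1)) := by rw [hβ.map_add]; ring
    _ ≤ β v + α u := add_le_add (hβ.mono hc) (hα.mono hxu')

theorem excess_zero (hα : IsFunctional α) (hβ : IsFunctional β) : excess α β 0 = 0 := by
  simp [excess, hα.map_zero, hβ.map_zero]

theorem excess_add (hα : IsFunctional α) (hβ : IsFunctional β) (hle : ∀ s, α s ≤ β s)
    (s t : S) : excess α β (s + t) = excess α β s + excess α β t := by
  unfold excess
  rw [hα.map_add, hβ.map_add]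
  by_cases hs : α s = ⊤
  · simp [hs]
  by_cases ht : α t = ⊤
  · simp [ht]
  rw [if_neg (ENNReal.add_ne_top.mpr ⟨hs, ht⟩), if_neg hs, if_neg ht,
    (ENNReal.cancel_of_ne hs).tsub_add_tsub_comm (ENNReal.cancel_of_ne ht) (hle s) (hle t)]

theorem excess_mono (hS : CuO5 S) (hα : IsFunctional α) (hβ : IsFunctional β)
    (hle : ∀ s, α s ≤ β s) : Monotone (excess α β) := by
  intro u v huv
  unfold excess
  by_cases hv : α v = ⊤
  · simp [hv]
  have hu : α u ≠ ⊤ := ne_top_of_le_ne_top hv (hα.mono huv)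
  rw [if_neg hu, if_neg hv, tsub_le_iff_right,
    ← ENNReal.add_le_add_iff_right hv, add_right_comm, tsub_add_cancel_of_le (hle v)]
  exact hα.cross_add_le hS hβ hle huv

end Excess

/-- For functionals `α β` on an O1-O5 semigroup, `α ≤ β` pointwise iff
`α + γ = β` for some functional `γ`. -/
theorem pointwise_le_iff_add_functional {S : Type*} [AddCommMonoid S] [PartialOrder S]
    (hS : CuO5 S) (α β : S → ℝ≥0∞) (hα : IsFunctional α) (hβ : IsFunctional β) :
    (∀ s : S, α s ≤ β s) ↔
      ∃ γ : S → ℝ≥0∞, IsFunctional γ ∧ ∀ s : S, α s + γ s = β s := by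
  constructor
  · intro hle
    have hmono := excess_mono hS hα hβ hle
    exact ⟨regularize (excess α β),
      isFunctional_regularize hS hmono (excess_zero hα hβ) (excess_add hα hβ hle),
      add_regularize_eq hS hα hβ hmono (add_excess hle)⟩
  · rintro ⟨γ, -, hγ⟩ s
    rw [← hγ s]
    exact le_self_add
end

section
/- Let S be an ordered semigroup satisfying axioms O1–O6, and let λ₁, λ₂, λ₃ be functionals on S. Then (λ₁ ∨ λ₂) + λ₃ = (λ₁ + λ₃) ∨ (λ₂ + λ₃), where ∨ denotes the least upper bound in F(S) and + is pointwise addition of functionals. -/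
open scoped ENNReal

/-!
`m + l₃` is an upper bound of `l₁ + l₃` and `l₂ + l₃`, so `m' ≤ m + l₃`. For the converse one
subtracts `l₃` from `m'`: the map sending `r` to `sup {m' x - l₃ x : x ≤ r, l₃ x < ∞}`, raised
to `∞` wherever `r` compactly contains some `x` with `l₃ x = ∞`, is a functional. Monotonicity
of `m' - l₃` comes from O5 and subadditivity from O6. This functional dominates `l₁` and `l₂`,
hence `m`, and equals `m' - l₃` wherever `l₃` is finite.
-/

section

variable {S : Type*} [PartialOrder S] {l μ : S → ℝ≥0∞}

noncomputable def finDiff (l μ : S → ℝ≥0∞) (r : S) : ℝ≥0∞ :=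
  ⨆ (x : S) (_ : x ≤ r ∧ l x ≠ ⊤), (μ x - l x)

theorem le_finDiff {x r : S} (hx : x ≤ r) (hx' : l x ≠ ⊤) : μ x - l x ≤ finDiff l μ r :=
  le_iSup₂ (f := fun (x : S) (_ : x ≤ r ∧ l x ≠ ⊤) => μ x - l x) x ⟨hx, hx'⟩

theorem finDiff_mono {r t : S} (hrt : r ≤ t) : finDiff l μ r ≤ finDiff l μ t :=
  iSup₂_le fun _ hx => le_finDiff (hx.1.trans hrt) hx.2

end

section

variable {S : Type*} [AddCommMonoid S] [PartialOrder S]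

theorem CC.trans_le {s t t' : S} (h : CC s t) (h' : t ≤ t') : CC s t' :=
  fun u hu x hx hle => h u hu x hx (h'.trans hle)

namespace CuO5

theorem le_add_right (hS : CuO5 S) (a b : S) : a ≤ a + b := by
  simpa only [add_zero] using hS.add_le_add (le_refl a) (hS.zeroLe b)

theorem le_add_left (hS : CuO5 S) (a b : S) : a ≤ b + a :=
  add_comm a b ▸ hS.le_add_right a b

theorem exists_seq_cc (hS : CuO5 S) (s : S) :
    ∃ u : ℕ → S, Monotone u ∧ (∀ n, CC (u n) (u (n + 1))) ∧ (∀ n, CC (u n) s) ∧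
      IsLUB (Set.range u) s := by
  obtain ⟨u, hcc, hlub⟩ := hS.O2 s
  exact ⟨u, monotone_nat_of_le_succ fun n => (hcc n).le, hcc,
    fun n => (hcc n).trans_le (hlub.1 ⟨n + 1, rfl⟩), hlub⟩

end CuO5

namespace IsFunctional

theorem add {f g : S → ℝ≥0∞} (hf : IsFunctional f) (hg : IsFunctional g) :
    IsFunctional fun s => f s + g s where
  map_zero := by simp [hf.map_zero, hg.map_zero]
  map_add s t := by rw [hf.map_add, hg.map_add]; ring
  mono h := add_le_add (hf.mono h) (hg.mono h)
  map_sup u hu x hx := by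
    rw [hf.map_sup u hu x hx, hg.map_sup u hu x hx]
    exact ENNReal.iSup_add_iSup fun i j => ⟨max i j,
      add_le_add (hf.mono (hu (le_max_left i j))) (hg.mono (hu (le_max_right i j)))⟩

theorem ne_top_of_le {l : S → ℝ≥0∞} (hl : IsFunctional l) {s t : S} (hst : s ≤ t)
    (ht : l t ≠ ⊤) : l s ≠ ⊤ :=
  ne_top_of_le_ne_top ht (hl.mono hst)

end IsFunctional

section Difference

variable {l μ : S → ℝ≥0∞}

theorem add_apply_le_add_apply (hS : CuO5 S) (hl : IsFunctional l) (hμ : IsFunctional μ)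
    (hle : l ≤ μ) {r t : S} (hrt : r ≤ t) : μ r + l t ≤ μ t + l r := by
  obtain ⟨u, hmono, -, hcc, hlub⟩ := hS.exists_seq_cc r
  rw [hμ.map_sup u hmono r hlub, ENNReal.iSup_add]
  refine iSup_le fun n => ?_
  obtain ⟨c, huc, htc⟩ := hS.O5 (hcc n) hrt
  calc μ (u n) + l t ≤ μ (u n) + (l r + l c) := by
        rw [← hl.map_add]; gcongr; exact hl.mono htc
    _ ≤ (μ (u n) + μ c) + l r := by rw [add_comm (l r), ← add_assoc]; gcongr; exact hle c
    _ ≤ μ t + l r := by rw [← hμ.map_add]; gcongr; exact hμ.mono huc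

theorem tsub_apply_le_tsub_apply (hS : CuO5 S) (hl : IsFunctional l) (hμ : IsFunctional μ)
    (hle : l ≤ μ) {r t : S} (hrt : r ≤ t) (ht : l t ≠ ⊤) : μ r - l r ≤ μ t - l t := by
  rw [tsub_le_iff_right, ← ENNReal.add_le_add_iff_right ht]
  calc μ r + l t ≤ μ t + l r := add_apply_le_add_apply hS hl hμ hle hrt
    _ = (μ t - l t) + l r + l t := by rw [add_right_comm, tsub_add_cancel_of_le (hle t)]

theorem tsub_apply_add (hl : IsFunctional l) (hμ : IsFunctional μ) (hle : l ≤ μ) {a b : S}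
    (ha : l a ≠ ⊤) (hb : l b ≠ ⊤) :
    μ (a + b) - l (a + b) = (μ a - l a) + (μ b - l b) := by
  rw [hl.map_add, hμ.map_add]
  refine ENNReal.sub_eq_of_eq_add (ENNReal.add_ne_top.2 ⟨ha, hb⟩) ?_
  rw [add_add_add_comm, tsub_add_cancel_of_le (hle a), tsub_add_cancel_of_le (hle b)]

theorem tsub_apply_eq_iSup (hS : CuO5 S) (hl : IsFunctional l) (hμ : IsFunctional μ)
    (hle : l ≤ μ) {r : S} (hr : l r ≠ ⊤) {u : ℕ → S} (hmono : Monotone u)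
    (hlub : IsLUB (Set.range u) r) :
    μ r - l r = ⨆ n, (μ (u n) - l (u n)) := by
  have hun n : l (u n) ≠ ⊤ := hl.ne_top_of_le (hlub.1 ⟨n, rfl⟩) hr
  refine ENNReal.sub_eq_of_eq_add hr ?_
  rw [hμ.map_sup u hmono r hlub, hl.map_sup u hmono r hlub,
    ENNReal.iSup_add_iSup fun i j => ⟨max i j,
      add_le_add (tsub_apply_le_tsub_apply hS hl hμ hle (hmono (le_max_left i j)) (hun _))
        (hl.mono (hmono (le_max_right i j)))⟩]
  exact iSup_congr fun n => (tsub_add_cancel_of_le (hle (u n))).symm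

theorem finDiff_eq_tsub (hS : CuO5 S) (hl : IsFunctional l) (hμ : IsFunctional μ)
    (hle : l ≤ μ) {r : S} (hr : l r ≠ ⊤) : finDiff l μ r = μ r - l r :=
  le_antisymm (iSup₂_le fun _ hx => tsub_apply_le_tsub_apply hS hl hμ hle hx.1 hr)
    (le_finDiff le_rfl hr)

theorem finDiff_zero (hS : CuO5 S) (hμ : IsFunctional μ) : finDiff l μ 0 = 0 := by
  refine nonpos_iff_eq_zero.1 (iSup₂_le fun x hx => ?_)
  rw [le_antisymm hx.1 (hS.zeroLe x), hμ.map_zero, zero_tsub]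

theorem finDiff_add_le (hS : CuO6 S) (hl : IsFunctional l) (hμ : IsFunctional μ)
    (hle : l ≤ μ) (a b : S) : finDiff l μ (a + b) ≤ finDiff l μ a + finDiff l μ b := by
  refine iSup₂_le fun x ⟨hxab, hx⟩ => ?_
  obtain ⟨u, hmono, -, hcc, hlub⟩ := hS.exists_seq_cc x
  rw [tsub_apply_eq_iSup hS.toCuO5 hl hμ hle hx hmono hlub]
  refine iSup_le fun n => ?_
  obtain ⟨a', b', hle', ha', ha'x, hb', hb'x⟩ := hS.O6 hxab (hcc n)
  have ha'F := hl.ne_top_of_le ha'x hx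
  have hb'F := hl.ne_top_of_le hb'x hx
  have hF : l (a' + b') ≠ ⊤ := by rw [hl.map_add]; exact ENNReal.add_ne_top.2 ⟨ha'F, hb'F⟩
  calc μ (u n) - l (u n) ≤ μ (a' + b') - l (a' + b') :=
        tsub_apply_le_tsub_apply hS.toCuO5 hl hμ hle hle' hF
    _ = (μ a' - l a') + (μ b' - l b') := tsub_apply_add hl hμ hle ha'F hb'F
    _ ≤ finDiff l μ a + finDiff l μ b := add_le_add (le_finDiff ha' ha'F) (le_finDiff hb' hb'F)

theorem add_finDiff_le (hS : CuO5 S) (hl : IsFunctional l) (hμ : IsFunctional μ)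
    (hle : l ≤ μ) (a b : S) : finDiff l μ a + finDiff l μ b ≤ finDiff l μ (a + b) := by
  have hzero {r : S} : ∃ x, x ≤ r ∧ l x ≠ ⊤ := ⟨0, hS.zeroLe r, by simp [hl.map_zero]⟩
  refine ENNReal.biSup_add_biSup_le' hzero hzero fun x ⟨hxa, hx⟩ y ⟨hyb, hy⟩ => ?_
  rw [← tsub_apply_add hl hμ hle hx hy]
  refine le_finDiff (hS.add_le_add hxa hyb) ?_
  rw [hl.map_add]
  exact ENNReal.add_ne_top.2 ⟨hx, hy⟩

theorem finDiff_map_sup (hS : CuO5 S) (hl : IsFunctional l) (hμ : IsFunctional μ)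
    (hle : l ≤ μ) {u : ℕ → S} (hu : Monotone u) {x : S} (hx : IsLUB (Set.range u) x) :
    finDiff l μ x = ⨆ n, finDiff l μ (u n) := by
  refine le_antisymm (iSup₂_le fun r ⟨hrx, hr⟩ => ?_)
    (iSup_le fun n => finDiff_mono (hx.1 ⟨n, rfl⟩))
  obtain ⟨w, hwmono, -, hwr, hwlub⟩ := hS.exists_seq_cc r
  rw [tsub_apply_eq_iSup hS hl hμ hle hr hwmono hwlub]
  refine iSup_le fun k => ?_
  obtain ⟨n, hn⟩ := (hwr k).trans_le hrx u hu x hx le_rfl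
  exact (le_finDiff hn (hl.ne_top_of_le (hwr k).le hr)).trans
    (le_iSup (fun n => finDiff l μ (u n)) n)

theorem isFunctional_finDiff (hS : CuO6 S) (hl : IsFunctional l) (hμ : IsFunctional μ)
    (hle : l ≤ μ) : IsFunctional (finDiff l μ) where
  map_zero := finDiff_zero hS.toCuO5 hμ
  map_add a b := le_antisymm (finDiff_add_le hS hl hμ hle a b)
    (add_finDiff_le hS.toCuO5 hl hμ hle a b)
  mono := finDiff_mono
  map_sup _ hu _ hx := finDiff_map_sup hS.toCuO5 hl hμ hle hu hx

noncomputable def infPart (l : S → ℝ≥0∞) (r : S) : ℝ≥0∞ :=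
  ⨆ (x : S) (_ : CC x r ∧ l x = ⊤), (⊤ : ℝ≥0∞)

theorem infPart_eq_top {x r : S} (hxr : CC x r) (hx : l x = ⊤) : infPart l r = ⊤ :=
  top_le_iff.1 (le_iSup₂ (f := fun (x : S) (_ : CC x r ∧ l x = ⊤) => (⊤ : ℝ≥0∞)) x ⟨hxr, hx⟩)

theorem infPart_eq_zero {r : S} (h : ∀ x, CC x r → l x ≠ ⊤) : infPart l r = 0 :=
  nonpos_iff_eq_zero.1 (iSup₂_le fun x hx => absurd hx.2 (h x hx.1))

theorem infPart_mono {r t : S} (hrt : r ≤ t) : infPart l r ≤ infPart l t :=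
  iSup₂_le fun _ hx => (infPart_eq_top (hx.1.trans_le hrt) hx.2).ge

theorem infPart_add (hS : CuO5 S) (hl : IsFunctional l) (a b : S) :
    infPart l (a + b) = infPart l a + infPart l b := by
  by_cases h : ∃ x, CC x (a + b) ∧ l x = ⊤
  · obtain ⟨x, hx, hxT⟩ := h
    obtain ⟨p, hpmono, -, hpa, hplub⟩ := hS.exists_seq_cc a
    obtain ⟨q, hqmono, -, hqb, hqlub⟩ := hS.exists_seq_cc b
    obtain ⟨k, hk⟩ := hx (fun n => p n + q n)
      (fun i j hij => hS.add_le_add (hpmono hij) (hqmono hij)) (a + b)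
      (hS.O4 p q hpmono hqmono a b hplub hqlub) le_rfl
    have hpq : l (p k) + l (q k) = ⊤ :=
      top_le_iff.1 (hxT ▸ (hl.mono hk).trans_eq (hl.map_add _ _))
    rw [infPart_eq_top hx hxT]
    rcases ENNReal.add_eq_top.1 hpq with hT | hT
    · rw [infPart_eq_top (hpa k) hT, top_add]
    · rw [infPart_eq_top (hqb k) hT, add_top]
  · push Not at h
    rw [infPart_eq_zero h, infPart_eq_zero fun x hx => h x (hx.trans_le (hS.le_add_right a b)),
      infPart_eq_zero fun x hx => h x (hx.trans_le (hS.le_add_left b a)), add_zero]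

theorem infPart_map_sup (hS : CuO5 S) (hl : IsFunctional l) {u : ℕ → S} (hu : Monotone u)
    {x : S} (hx : IsLUB (Set.range u) x) : infPart l x = ⨆ n, infPart l (u n) := by
  refine le_antisymm ?_ (iSup_le fun n => infPart_mono (hx.1 ⟨n, rfl⟩))
  by_cases h : ∃ y, CC y x ∧ l y = ⊤
  · obtain ⟨y, hy, hyT⟩ := h
    obtain ⟨w, hwmono, hwcc, hwx, hwlub⟩ := hS.exists_seq_cc x
    obtain ⟨k, hk⟩ := hy w hwmono x hwlub le_rfl
    obtain ⟨n, hn⟩ := hwx (k + 1) u hu x hx le_rfl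
    have hwk : infPart l (u n) = ⊤ :=
      infPart_eq_top ((hwcc k).trans_le hn) (top_le_iff.1 (hyT ▸ hl.mono hk))
    exact le_iSup_of_le n (le_top.trans_eq hwk.symm)
  · push Not at h
    rw [infPart_eq_zero h]
    exact zero_le

theorem isFunctional_infPart (hS : CuO5 S) (hl : IsFunctional l) : IsFunctional (infPart l) where
  map_zero := infPart_eq_zero fun x hx => by
    rw [le_antisymm hx.le (hS.zeroLe x), hl.map_zero]; exact ENNReal.zero_ne_top
  map_add := infPart_add hS hl
  mono := infPart_mono
  map_sup _ hu _ hx := infPart_map_sup hS hl hu hx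

noncomputable def funcDiff (l μ : S → ℝ≥0∞) (r : S) : ℝ≥0∞ :=
  finDiff l μ r + infPart l r

theorem isFunctional_funcDiff (hS : CuO6 S) (hl : IsFunctional l) (hμ : IsFunctional μ)
    (hle : l ≤ μ) : IsFunctional (funcDiff l μ) :=
  (isFunctional_finDiff hS hl hμ hle).add (isFunctional_infPart hS.toCuO5 hl)

theorem funcDiff_eq_tsub (hS : CuO5 S) (hl : IsFunctional l) (hμ : IsFunctional μ)
    (hle : l ≤ μ) {r : S} (hr : l r ≠ ⊤) : funcDiff l μ r = μ r - l r := by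
  rw [funcDiff, finDiff_eq_tsub hS hl hμ hle hr,
    infPart_eq_zero fun x hx => hl.ne_top_of_le hx.le hr, add_zero]

theorem le_funcDiff (hS : CuO5 S) {ν : S → ℝ≥0∞} (hν : IsFunctional ν)
    (hνμ : ∀ x, ν x + l x ≤ μ x) (r : S) : ν r ≤ funcDiff l μ r := by
  by_cases hex : ∃ x, CC x r ∧ l x = ⊤
  · obtain ⟨x, hx, hxT⟩ := hex
    rw [funcDiff, infPart_eq_top hx hxT, add_top]
    exact le_top
  · push Not at hex
    obtain ⟨u, hmono, -, hcc, hlub⟩ := hS.exists_seq_cc r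
    rw [hν.map_sup u hmono r hlub]
    refine (iSup_le fun n => ?_).trans le_self_add
    have hF := hex (u n) (hcc n)
    exact (ENNReal.le_sub_of_add_le_right hF (hνμ (u n))).trans (le_finDiff (hcc n).le hF)

end Difference

end

/-- `(λ₁ ∨ λ₂) + λ₃ = (λ₁ + λ₃) ∨ (λ₂ + λ₃)` in F(S). -/
theorem sup_add_distrib {S : Type*} [AddCommMonoid S] [PartialOrder S]
    (hS : CuO6 S) (l₁ l₂ l₃ : S → ℝ≥0∞)
    (h₁ : IsFunctional l₁) (h₂ : IsFunctional l₂) (h₃ : IsFunctional l₃)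
    (m m' : S → ℝ≥0∞) (hm : IsFSup l₁ l₂ m)
    (hm' : IsFSup (fun s => l₁ s + l₃ s) (fun s => l₂ s + l₃ s) m') :
    ∀ s : S, m s + l₃ s = m' s := by
  have h3m : l₃ ≤ m' := fun s => le_add_self.trans (hm'.2.1 s)
  have hm'_le : ∀ s, m' s ≤ m s + l₃ s :=
    hm'.2.2.2 _ (hm.1.add h₃) (fun s => add_le_add_left (hm.2.1 s) _)
      (fun s => add_le_add_left (hm.2.2.1 s) _)
  have hm_le : ∀ s, m s ≤ funcDiff l₃ m' s :=
    hm.2.2.2 _ (isFunctional_funcDiff hS h₃ hm'.1 h3m)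
      (le_funcDiff hS.toCuO5 h₁ hm'.2.1) (le_funcDiff hS.toCuO5 h₂ hm'.2.2.1)
  intro s
  refine le_antisymm ?_ (hm'_le s)
  by_cases hs : l₃ s = ⊤
  · rw [eq_top_mono (h3m s) hs]
    exact le_top
  · calc m s + l₃ s ≤ (m' s - l₃ s) + l₃ s := by
          gcongr
          exact (hm_le s).trans_eq (funcDiff_eq_tsub hS.toCuO5 h₃ hm'.1 h3m hs)
      _ = m' s := tsub_add_cancel_of_le (h3m s)
end

section
/- Let S be an ordered semigroup satisfying axioms O1–O5 and having a countable dense subset. Let O ⊆ S be a nonempty subset that is an order ideal (f ≤ g and g ∈ O imply f ∈ O), is upward directed, and is closed under the suprema of increasing sequences. Then O has a maximum element. -/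
open scoped ENNReal

/-- a nonempty upward directed order ideal closed under suprema of
increasing sequences has a maximum element (given a countable dense subset). -/
theorem ideal_has_max {S : Type*} [AddCommMonoid S] [PartialOrder S]
    (hS : CuO5 S) (hd : ∃ D : Set S, D.Countable ∧ IsDenseSub D)
    (O : Set S) (hne : O.Nonempty)
    (hideal : ∀ {f g : S}, f ≤ g → g ∈ O → f ∈ O)
    (hdir : ∀ p ∈ O, ∀ q ∈ O, ∃ r ∈ O, p ≤ r ∧ q ≤ r)
    (hsup : ∀ u : ℕ → S, Monotone u → (∀ n, u n ∈ O) → ∀ x : S,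
      IsLUB (Set.range u) x → x ∈ O) :
    ∃ mx ∈ O, ∀ x ∈ O, x ≤ mx := by
  obtain ⟨D, hDc, hDd⟩ := hd
  set B : Set S := D ∩ O with hB
  have hBne : B.Nonempty := by
    obtain ⟨s, hs⟩ := hne
    obtain ⟨u, huD, -, hlub⟩ := hDd s
    exact ⟨u 0, huD 0, hideal (hlub.1 ⟨0, rfl⟩) hs⟩
  obtain ⟨f, hf⟩ := (hDc.mono Set.inter_subset_left : B.Countable).exists_eq_range hBne
  have hfB : ∀ n, f n ∈ B := fun n => hf ▸ ⟨n, rfl⟩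
  have hfO : ∀ n, f n ∈ O := fun n => (hfB n).2
  choose F hFO hF1 hF2 using fun (p : S) (hp : p ∈ O) (n : ℕ) => hdir p hp (f n) (hfO n)
  -- build monotone sequence in O dominating f
  let r : ℕ → {q : S // q ∈ O} := fun n =>
    Nat.rec ⟨f 0, hfO 0⟩ (fun k ih => ⟨F ih.1 ih.2 (k + 1), hFO ih.1 ih.2 (k + 1)⟩) n
  have hrmono : Monotone fun n => (r n).1 := by
    apply monotone_nat_of_le_succ
    intro n
    exact hF1 (r n).1 (r n).2 (n + 1)
  have hfr : ∀ n, f n ≤ (r n).1 := by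
    intro n
    cases n with
    | zero => exact le_rfl
    | succ k => exact hF2 (r k).1 (r k).2 (k + 1)
  obtain ⟨mx, hmx⟩ := hS.O1 (fun n => (r n).1) hrmono
  have hmxO : mx ∈ O := hsup _ hrmono (fun n => (r n).2) mx hmx
  refine ⟨mx, hmxO, fun x hx => ?_⟩
  obtain ⟨u, huD, -, hlub⟩ := hDd x
  refine hlub.2 ?_
  rintro _ ⟨n, rfl⟩
  have huO : u n ∈ O := hideal (hlub.1 ⟨n, rfl⟩) hx
  have : u n ∈ B := ⟨huD n, huO⟩
  rw [hf] at this
  obtain ⟨k, hk⟩ := this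
  calc u n = f k := hk.symm
    _ ≤ (r k).1 := hfr k
    _ ≤ mx := hmx.1 ⟨k, rfl⟩
end

section
/- Let S be an ordered semigroup with real multiplication satisfying axioms O1–O6 and having a countable dense subset. Then for every f ∈ S and every increasing sequence (g_n) in S, sup_n (f ∧ g_n) = f ∧ (sup_n g_n), where ∧ denotes the greatest lower bound in S. -/
open scoped ENNReal

/-- `sup_n (f ∧ g_n) = f ∧ sup_n g_n`. -/
theorem inf_sup_comm {S : Type*} [AddCommMonoid S] [PartialOrder S]
    (hS : CuO6 S) (rm : RealMul S) (hd : ∃ D : Set S, D.Countable ∧ IsDenseSub D)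
    (f : S) (g : ℕ → S) (hg : Monotone g) (G : S) (hG : IsLUB (Set.range g) G)
    (m : ℕ → S) (hm : ∀ n, IsGLB ({f, g n} : Set S) (m n))
    (M : S) (hM : IsGLB ({f, G} : Set S) M) :
    IsLUB (Set.range m) M := by
  have cc_le : ∀ {s t : S}, CC s t → s ≤ t := by
    intro s t h
    obtain ⟨n, hn⟩ := h (fun _ => t) monotone_const t
      (by rw [Set.range_const]; exact isLUB_singleton) le_rfl
    exact hn
  constructor
  · rintro x ⟨n, rfl⟩
    refine hM.2 ?_
    rintro y (rfl | rfl)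
    · exact (hm n).1 (Set.mem_insert _ _)
    · exact le_trans ((hm n).1 (Set.mem_insert_of_mem _ rfl)) (hG.1 ⟨n, rfl⟩)
  · intro b hb
    obtain ⟨u, hu_cc, hu_lub⟩ := hS.O2 M
    refine hu_lub.2 ?_
    rintro x ⟨k, rfl⟩
    have huM : u (k + 1) ≤ M := hu_lub.1 ⟨k + 1, rfl⟩
    have hMG : M ≤ G := hM.1 (Set.mem_insert_of_mem _ rfl)
    obtain ⟨n, hn⟩ := hu_cc k g hg G hG (le_trans huM hMG)
    have hukf : u k ≤ f :=
      le_trans (cc_le (hu_cc k)) (le_trans huM (hM.1 (Set.mem_insert _ _)))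
    have : u k ≤ m n := by
      refine (hm n).2 ?_
      rintro y (rfl | rfl)
      · exact hukf
      · exact hn
    exact le_trans this (hb ⟨n, rfl⟩)
end

section
/- Let S be an ordered semigroup with real multiplication satisfying axioms O1–O6 and having a countable dense subset. Then for all f, g, h ∈ S, (f + g) ∧ h ≤ (f ∧ h) + (g ∧ h), where ∧ denotes the greatest lower bound in S. -/
open scoped ENNReal

/-- `(f + g) ∧ h ≤ (f ∧ h) + (g ∧ h)`. -/
theorem add_inf_le {S : Type*} [AddCommMonoid S] [PartialOrder S]
    (hS : CuO6 S) (rm : RealMul S) (hd : ∃ D : Set S, D.Countable ∧ IsDenseSub D)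
    (f g h p q r : S) (hp : IsGLB ({f + g, h} : Set S) p)
    (hq : IsGLB ({f, h} : Set S) q) (hr : IsGLB ({g, h} : Set S) r) :
    p ≤ q + r := by
  obtain ⟨u, hcc, hlub⟩ := hS.O2 p
  have hpfg : p ≤ f + g := hp.1 (by simp)
  have hph : p ≤ h := hp.1 (by simp)
  have hup : ∀ n, u n ≤ p := fun n => hlub.1 ⟨n, rfl⟩
  apply hlub.2
  rintro _ ⟨n, rfl⟩
  have hle : u (n + 1) ≤ f + g := (hup (n + 1)).trans hpfg
  obtain ⟨r', t', h1, h2, h3, h4, h5⟩ := hS.O6 hle (hcc n)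
  have hr'q : r' ≤ q := hq.2 fun x hx => by
    rcases hx with hx | hx
    · exact hx ▸ h2
    · simp only [Set.mem_singleton_iff] at hx
      exact hx ▸ (h3.trans ((hup (n + 1)).trans hph))
  have ht'r : t' ≤ r := hr.2 fun x hx => by
    rcases hx with hx | hx
    · exact hx ▸ h4
    · simp only [Set.mem_singleton_iff] at hx
      exact hx ▸ (h5.trans ((hup (n + 1)).trans hph))
  calc u n ≤ r' + t' := h1
    _ ≤ q + t' := hS.addRightMono hr'q t'
    _ = t' + q := add_comm _ _
    _ ≤ r + q := hS.addRightMono ht'r q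
    _ = q + r := add_comm _ _
end
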